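/- Let (θ̌, φ̌) ∈ ℝᵖ × (0,∞) be a minimizer over (θ, φ) ∈ ℝᵖ × (0,∞) of the function G(θ, φ) = −(1/2)·log φ + φ·‖y‖₂²/(2n) − (1/n)·yᵀXθ + ‖Xθ‖₂²/(2nφ) + λ·‖θ‖₁²/φ, where λ > 0. Then β̌ := θ̌/φ̌ is a minimizer over β ∈ ℝᵖ of the organic lasso objective O_λ(β) = (1/n)·‖y − Xβ‖₂² + 2λ·‖β‖₁², and 1/φ̌ equals the minimal value σ̌²_λ = inf_{β ∈ ℝᵖ} O_λ(β). -/
import Mathlib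


open MeasureTheory ProbabilityTheory Matrix
open scoped ENNReal

noncomputable section

/-- squared Euclidean norm on ℝⁿ -/
def l2sq {n : ℕ} (v : Fin n → ℝ) : ℝ := ∑ i, (v i) ^ 2

/-- ℓ₁ norm on ℝᵖ -/
def l1 {p : ℕ} (b : Fin p → ℝ) : ℝ := ∑ j, |b j|

/-- sup norm on ℝᵖ -/
def linf {p : ℕ} (v : Fin p → ℝ) : ℝ := ⨆ j, |v j|


lemma l2sq_nonneg {n : ℕ} (v : Fin n → ℝ) : 0 ≤ l2sq v :=
  Finset.sum_nonneg fun i _ => sq_nonneg _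

lemma l2sq_smul {n : ℕ} (c : ℝ) (v : Fin n → ℝ) : l2sq (c • v) = c^2 * l2sq v := by
  simp [l2sq, Finset.mul_sum, mul_pow]

lemma l1_smul {p : ℕ} (c : ℝ) (b : Fin p → ℝ) : l1 (c • b) = |c| * l1 b := by
  simp [l1, Finset.mul_sum, abs_mul]

lemma l2sq_sub {n : ℕ} (y v : Fin n → ℝ) :
    l2sq (y - v) = l2sq y - 2 * (y ⬝ᵥ v) + l2sq v := by
  simp only [l2sq, dotProduct, ← Finset.sum_add_distrib, ← Finset.sum_sub_distrib,
    Finset.mul_sum]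
  apply Finset.sum_congr rfl
  intro i _
  simp [Pi.sub_apply]
  ring

/-- a minimizer of the organic-lasso natural-parameterization objective
yields a minimizer of the ℓ₁²-penalized least squares problem, and `1/φ̌` is its
optimal value. -/
theorem organic_lasso_equivalence {n p : ℕ} (hn : 0 < n)
    (X : Matrix (Fin n) (Fin p) ℝ) (y : Fin n → ℝ) (lam : ℝ) (hlam : 0 < lam)
    (θ : Fin p → ℝ) (φ : ℝ) (hφ : 0 < φ)
    (hmin : ∀ (t : Fin p → ℝ) (f : ℝ), 0 < f →
      -(1/2) * Real.log φ + φ * l2sq y / (2*n) - (1/n) * (y ⬝ᵥ X.mulVec θ)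
          + l2sq (X.mulVec θ) / (2*n*φ) + lam * (l1 θ)^2 / φ
        ≤ -(1/2) * Real.log f + f * l2sq y / (2*n) - (1/n) * (y ⬝ᵥ X.mulVec t)
          + l2sq (X.mulVec t) / (2*n*f) + lam * (l1 t)^2 / f) :
    (∀ β : Fin p → ℝ,
      (1/n) * l2sq (y - X.mulVec (φ⁻¹ • θ)) + 2*lam * (l1 (φ⁻¹ • θ))^2
        ≤ (1/n) * l2sq (y - X.mulVec β) + 2*lam * (l1 β)^2) ∧
    1/φ = (⨅ β : Fin p → ℝ, (1/n) * l2sq (y - X.mulVec β) + 2*lam * (l1 β)^2) := by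

  have hnR : (0:ℝ) < n := Nat.cast_pos.mpr hn
  set O : (Fin p → ℝ) → ℝ :=
    fun β => (1/n) * l2sq (y - X.mulVec β) + 2*lam * (l1 β)^2 with hO
  -- key identity
  have key : ∀ (β : Fin p → ℝ) (f : ℝ), 0 < f →
      -(1/2) * Real.log f + f * l2sq y / (2*n) - (1/n) * (y ⬝ᵥ X.mulVec (f • β))
          + l2sq (X.mulVec (f • β)) / (2*n*f) + lam * (l1 (f • β))^2 / f
        = -(1/2) * Real.log f + (f/2) * O β := by
    intro β f hf
    have h1 : X.mulVec (f • β) = f • X.mulVec β := by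
      rw [Matrix.mulVec_smul]
    rw [h1, l2sq_smul, l1_smul, abs_of_pos hf, hO]
    simp only [dotProduct_smul, l2sq_sub, smul_eq_mul]
    field_simp
    ring
  set β' : Fin p → ℝ := φ⁻¹ • θ with hβ'
  have hθ : θ = φ • β' := by rw [hβ', smul_inv_smul₀ hφ.ne']
  -- rewritten minimality
  have hmin' : ∀ (β : Fin p → ℝ) (f : ℝ), 0 < f →
      -(1/2) * Real.log φ + (φ/2) * O β' ≤ -(1/2) * Real.log f + (f/2) * O β := by
    intro β f hf
    have := hmin (f • β) f hf
    rwa [hθ, key β' φ hφ, key β f hf] at this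
  -- part 1
  have part1 : ∀ β, O β' ≤ O β := by
    intro β
    have h' : φ/2 * O β' ≤ φ/2 * O β := by linarith [hmin' β φ hφ]
    exact le_of_mul_le_mul_left h' (half_pos hφ)
  set c : ℝ := O β' with hc
  clear_value c
  have hc0 : 0 ≤ c := by
    rw [hc, hO]
    have := l2sq_nonneg (y - X.mulVec β')
    positivity
  have hcpos : 0 < c := by
    rcases hc0.lt_or_eq with h | h
    · exact h
    · exfalso
      have h2 := hmin' β' (φ * Real.exp 1) (by positivity)
      rw [← hc, ← h] at h2
      rw [Real.log_mul hφ.ne' (Real.exp_pos 1).ne', Real.log_exp] at h2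
      nlinarith [h2]
  -- now take f = 1/c
  have h3 := hmin' β' (1/c) (by positivity)
  rw [← hc] at h3
  have hlogc : Real.log (1/c) = -Real.log c := by rw [one_div, Real.log_inv]
  rw [hlogc] at h3
  -- t = φ * c satisfies t - log t ≤ 1
  have hlog : Real.log (φ * c) = Real.log φ + Real.log c := Real.log_mul hφ.ne' hcpos.ne'
  have h5 : (1:ℝ)/c/2*c = 1/2 := by field_simp
  rw [h5] at h3
  have ht1 : φ * c - Real.log (φ * c) ≤ 1 := by
    rw [hlog]
    have h6 : φ / 2 * c = φ * c / 2 := by ring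
    rw [h6] at h3
    linarith
  have ht : φ * c = 1 := by
    by_contra hne
    have := Real.log_lt_sub_one_of_pos (by positivity : (0:ℝ) < φ * c) hne
    linarith
  have hinv : 1/φ = c := by
    field_simp
    linarith [ht]
  rw [hc] at part1
  constructor
  · exact part1
  · rw [hinv, hc]
    refine le_antisymm (le_ciInf part1) (ciInf_le ?_ β')
    refine ⟨0, ?_⟩
    rintro x ⟨β, rfl⟩
    rw [hO]
    have := l2sq_nonneg (y - X.mulVec β)
    positivity
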